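/- For every p ∈ ℕ^ℕ: {p} <_M Succ(p), and for every A ⊆ ℕ^ℕ with {p} <_M A one has Succ(p) ≤_M A. (In other words, Succ(p) is the immediate successor of {p} in the Medvedev degrees, in the strong sense.) -/

import Mathlib

namespace WeihrauchPaper

/-- Baire space ℕ^ℕ. -/
abbrev Baire : Type := ℕ → ℕ

/-- Prepend a natural number to an element of Baire space: `(cons e q) 0 = e`, `(cons e q) (n+1) = q n`. -/
def cons (e : ℕ) (q : Baire) : Baire
  | 0 => e
  | n + 1 => q n

/-- Pairing of two elements of Baire space by interleaving. -/
def pair (p q : Baire) : Baire := fun n => if n % 2 = 0 then p (n / 2) else q (n / 2)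

def left (x : Baire) : Baire := fun n => x (2 * n)
def right (x : Baire) : Baire := fun n => x (2 * n + 1)

/-- The finite initial segment of `p` of length `k`. -/
def pref (p : Baire) (k : ℕ) : List ℕ := List.ofFn fun i : Fin k => p i

/-- Result of running the `e`-th partial computable function on the pair
(code of the length-`k` prefix of `p`, input `n`). -/
def query (e : ℕ) (p : Baire) (k n : ℕ) : Part ℕ :=
  Nat.Partrec.Code.eval (Denumerable.ofNat Nat.Partrec.Code e)
    (Nat.pair (Encodable.encode (pref p k)) n)

/-- `FEval e p q` : the `e`-th partial computable functional on Baire space, applied to `p`,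
is defined and equals `q`.  The value at `n` is obtained from the least prefix length `k`
on which the computation converges, which makes the functional single-valued. -/
def FEval (e : ℕ) (p q : Baire) : Prop :=
  ∀ n, ∃ k, query e p k n = Part.some (q n) ∧ ∀ k' < k, ¬ (query e p k' n).Dom

/-- Turing reducibility on Baire space: `q ≤_T p` iff `q = Φ_e(p)` for some `e`. -/
def TuringLE (q p : Baire) : Prop := ∃ e, FEval e p q

/-- Medvedev reducibility: `A ≤_M B` iff some partial computable functional is defined on all
of `B` and maps `B` into `A`. -/
def MedLE (A B : Set Baire) : Prop := ∃ e, ∀ q ∈ B, ∃ p, FEval e q p ∧ p ∈ A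

def MedEquiv (A B : Set Baire) : Prop := MedLE A B ∧ MedLE B A

def MedLT (A B : Set Baire) : Prop := MedLE A B ∧ ¬ MedLE B A

/-- The meet `P ∧ Q := 0⌢P ∪ 1⌢Q` in the Medvedev degrees. -/
def medMeet (P Q : Set Baire) : Set Baire := (cons 0 '' P) ∪ (cons 1 '' Q)

/-- `Succ p = { e⌢q : Φ_e(q) = p and q ≰_T p }`. -/
def Succ (p : Baire) : Set Baire :=
  {x | ∃ e q, x = cons e q ∧ FEval e q p ∧ ¬ TuringLE q p}

/-- A problem (partial multi-valued function on Baire space), represented as the map sending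
an instance to its (possibly empty) set of solutions. -/
abbrev Problem : Type := Baire → Set Baire

/-- The domain of a problem: the instances having at least one solution. -/
def dom (f : Problem) : Set Baire := {x | (f x).Nonempty}

/-- Weihrauch reducibility `f ≤_W g`. -/
def WLE (f g : Problem) : Prop :=
  ∃ eΦ eΨ, ∀ p ∈ dom f, ∃ p', FEval eΦ p p' ∧ p' ∈ dom g ∧
    ∀ q ∈ g p', ∃ r, FEval eΨ (pair p q) r ∧ r ∈ f p

def WEquiv (f g : Problem) : Prop := WLE f g ∧ WLE g f

def WLT (f g : Problem) : Prop := WLE f g ∧ ¬ WLE g f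

/-- The identity on Baire space, as a problem. -/
def idB : Problem := fun p => {p}

/-- The restriction of the identity to `X ⊆ ℕ^ℕ`, as a problem. -/
def idRestrict (X : Set Baire) : Problem := fun p => {q | p ∈ X ∧ q = p}

/-- The join `f ⊔ g`, with domain `{0}×dom f ∪ {1}×dom g` (coded via `cons`). -/
def join (f g : Problem) : Problem := fun x =>
  if x 0 = 0 then f (fun n => x (n + 1))
  else if x 0 = 1 then g (fun n => x (n + 1))
  else ∅

/-- The meet `f ⊓ g`, with domain `dom f × dom g` (coded via `pair`) and
`(f ⊓ g)(x,z) = {0}×f(x) ∪ {1}×g(z)` (coded via `cons`). -/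
def meet (f g : Problem) : Problem := fun x =>
  {y | left x ∈ dom f ∧ right x ∈ dom g ∧
    ((∃ z ∈ f (left x), y = cons 0 z) ∨ (∃ z ∈ g (right x), y = cons 1 z))}

/-- The constant sequence with value `n`. -/
def const (n : ℕ) : Baire := fun _ => n

/-- The characteristic function of `D ⊆ ℕ` as a problem: defined on the constant sequences,
with `χ_D(n)` the constantly-1 sequence if `n ∈ D` and the constantly-0 sequence otherwise. -/
def chi (D : Set ℕ) : Problem := fun x =>
  {y | ∃ n, x = const n ∧ ((n ∈ D ∧ y = const 1) ∨ (n ∉ D ∧ y = const 0))}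

/-- The set of non-computable elements of Baire space. -/
def NR : Set Baire := {q | ¬ Computable q}

/-- `f` is a minimal cover of `h` in the Weihrauch degrees. -/
def MinimalCover (f h : Problem) : Prop :=
  WLT h f ∧ ¬ ∃ g, WLT h g ∧ WLT g f

/-- `f` is a strong minimal cover of `h` in the Weihrauch degrees. -/
def StrongMinimalCover (f h : Problem) : Prop :=
  WLT h f ∧ ∀ g, WLT g f → WLE g h

open Nat.Partrec (Code)
open Nat.Partrec.Code

/-- From a typed partial recursive prefix-functional we get an index for `query`. -/
lemma exists_index (F : List ℕ → ℕ →. ℕ) (hF : Partrec₂ F) :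
    ∃ e, ∀ (p : Baire) (k n : ℕ), query e p k n = F (pref p k) n := by
  obtain ⟨c, hc⟩ := Nat.Partrec.Code.exists_code.1 hF
  refine ⟨Encodable.encode c, fun p k n => ?_⟩
  have h1 : Denumerable.ofNat Nat.Partrec.Code (Encodable.encode c) = c :=
    Denumerable.ofNat_encode c
  have h2 : Nat.pair (Encodable.encode (pref p k)) n
      = Encodable.encode ((pref p k, n) : List ℕ × ℕ) := by
    simp [Encodable.encode_prod_val, Encodable.encode_nat]
  simp only [query, h1, h2, hc]
  simp [Encodable.encodek, Part.map_id' Encodable.encode_nat]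

lemma pref_zero (p : Baire) : pref p 0 = [] := rfl

lemma pref_succ (p : Baire) (k : ℕ) :
    pref p (k + 1) = p 0 :: pref (fun n => p (n + 1)) k := by
  simp [pref, List.ofFn_succ]

lemma cons_zero (e : ℕ) (q : Baire) : cons e q 0 = e := rfl

lemma cons_succ (e : ℕ) (q : Baire) (n : ℕ) : cons e q (n + 1) = q n := rfl

lemma pref_cons (e : ℕ) (q : Baire) (k : ℕ) :
    pref (cons e q) (k + 1) = e :: pref q k := by
  rw [pref_succ]; rfl

lemma pref_get? (q : Baire) (k n : ℕ) :
    (pref q k)[n]? = if n < k then some (q n) else none := by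
  rw [pref, List.getElem?_ofFn]
  split <;> simp_all

lemma length_pref (p : Baire) (k : ℕ) : (pref p k).length = k := by
  simp [pref]

/-- The functional `q ↦ c⌢q` is computable (uniformly, but we fix `c`). -/
lemma exists_cons_index (c : ℕ) : ∃ e, ∀ q : Baire, FEval e q (cons c q) := by
  have hG : Primrec (fun a : List ℕ × ℕ =>
      if a.2 = 0 then some c else a.1[a.2.pred]?) :=
    Primrec.ite (Primrec.eq.comp Primrec.snd (Primrec.const 0)) (Primrec.const (some c))
      (Primrec.list_getElem?.comp Primrec.fst (Primrec.pred.comp Primrec.snd))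
  have hF : Partrec₂ (fun (l : List ℕ) (n : ℕ) =>
      (Part.ofOption (if n = 0 then some c else l[n.pred]?))) :=
    Computable.ofOption hG.to_comp
  obtain ⟨e, he⟩ := exists_index _ hF
  refine ⟨e, fun q n => ?_⟩
  cases n with
  | zero =>
      refine ⟨0, ?_, by omega⟩
      rw [he]
      simp [cons_zero]
  | succ n =>
      refine ⟨n + 1, ?_, fun k' hk' => ?_⟩
      · rw [he]
        simp [pref_get?, cons_succ]
      · rw [he]
        simp [pref_get?, show ¬ n < k' by omega]

/-- If `Φ_e(p) = x` then the tail of `x` is Turing reducible to `p`. -/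
lemma feval_tail {e : ℕ} {p x : Baire} (h : FEval e p x) :
    TuringLE (fun n => x (n + 1)) p := by
  have h1 : Nat.Partrec ((Denumerable.ofNat Nat.Partrec.Code e).eval) :=
    Nat.Partrec.Code.exists_code.2 ⟨_, rfl⟩
  have hg : Computable (fun m : ℕ => Nat.pair m.unpair.1 (m.unpair.2 + 1)) :=
    (Primrec₂.natPair.comp (Primrec.fst.comp Primrec.unpair)
      (Primrec.succ.comp (Primrec.snd.comp Primrec.unpair))).to_comp
  have h2 : Partrec (fun m : ℕ =>
      (Denumerable.ofNat Nat.Partrec.Code e).eval (Nat.pair m.unpair.1 (m.unpair.2 + 1))) :=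
    (Partrec.nat_iff.2 h1).comp hg
  obtain ⟨c, hc⟩ := Nat.Partrec.Code.exists_code.1 (Partrec.nat_iff.1 h2)
  refine ⟨Encodable.encode c, fun n => ?_⟩
  have key : ∀ k, query (Encodable.encode c) p k n = query e p k (n + 1) := by
    intro k
    simp only [query, Denumerable.ofNat_encode, hc]
    simp [Nat.unpair_pair]
  obtain ⟨k, hk1, hk2⟩ := h (n + 1)
  exact ⟨k, by rw [key]; exact hk1, fun k' hk' => by rw [key]; exact hk2 k' hk'⟩

/-- A universal functional: on `e⌢q` it computes `Φ_e(q)`. -/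
lemma exists_univ_index :
    ∃ u, ∀ (e : ℕ) (q x : Baire), FEval e q x → FEval u (cons e q) x := by
  have hhead : Computable (fun a : List ℕ × ℕ => a.1.head?) :=
    (Primrec.list_head?.comp Primrec.fst).to_comp
  have hpair : Computable (fun x : (List ℕ × ℕ) × ℕ =>
      Nat.pair (Encodable.encode x.1.1.tail) x.1.2) :=
    (Primrec₂.natPair.comp
      (Primrec.encode.comp (Primrec.list_tail.comp (Primrec.fst.comp Primrec.fst)))
      (Primrec.snd.comp Primrec.fst)).to_comp
  have hinner : Partrec₂ (fun (a : List ℕ × ℕ) (e : ℕ) =>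
      (Denumerable.ofNat Nat.Partrec.Code e).eval (Nat.pair (Encodable.encode a.1.tail) a.2)) :=
    (Nat.Partrec.Code.eval_part.comp ((Computable.ofNat _).comp Computable.snd) hpair)
  have hF : Partrec₂ (fun (l : List ℕ) (n : ℕ) =>
      (Part.ofOption l.head?).bind fun e =>
        (Denumerable.ofNat Nat.Partrec.Code e).eval (Nat.pair (Encodable.encode l.tail) n)) :=
    (Computable.ofOption hhead).bind hinner
  obtain ⟨u, hu⟩ := exists_index _ hF
  refine ⟨u, fun e q x h n => ?_⟩
  obtain ⟨k, hk1, hk2⟩ := h n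
  refine ⟨k + 1, ?_, fun k' hk' => ?_⟩
  · rw [hu, pref_cons]
    simpa [Part.bind_some, query] using hk1
  · rw [hu]
    cases k' with
    | zero => simp [pref_zero]
    | succ j =>
        rw [pref_cons]
        simpa [Part.bind_some, query] using hk2 j (by omega)

/-- `Succ p` is the immediate successor of `{p}` in the Medvedev degrees, in the strong sense. -/
theorem succ_immediate_successor (p : Baire) :
    MedLT {p} (Succ p) ∧ ∀ A : Set Baire, MedLT {p} A → MedLE (Succ p) A := by
  obtain ⟨u, hu⟩ := exists_univ_index
  constructor
  · constructor
    · refine ⟨u, fun x hx => ?_⟩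
      obtain ⟨e, q, rfl, hfe, -⟩ := hx
      exact ⟨p, hu e q p hfe, rfl⟩
    · rintro ⟨e, he⟩
      obtain ⟨x, hfx, hxS⟩ := he p rfl
      obtain ⟨e', q', hxeq, hfe', hqT⟩ := hxS
      apply hqT
      have ht := feval_tail hfx
      have hq' : (fun n => x (n + 1)) = q' := by
        subst hxeq; funext n; rfl
      rwa [hq'] at ht
  · rintro A ⟨⟨e0, he0⟩, hnot⟩
    have he0' : ∀ q ∈ A, FEval e0 q p := by
      intro q hq
      obtain ⟨p', hp', hmem⟩ := he0 q hq
      rwa [Set.mem_singleton_iff.1 hmem] at hp'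
    obtain ⟨ec, hec⟩ := exists_cons_index e0
    refine ⟨ec, fun q hq => ⟨cons e0 q, hec q, e0, q, rfl, he0' q hq, ?_⟩⟩
    rintro ⟨e, he⟩
    exact hnot ⟨e, fun r hr => ⟨q, by rw [Set.mem_singleton_iff.1 hr]; exact he, hq⟩⟩

end WeihrauchPaper
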